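/- Existence of a left noise map (first part of Theorem 1): let G be a finite group, U : G → U(d) a group homomorphism, and T : G → superoperators an arbitrary family. Let W be the subspace of superoperators X with X(I_d) = 0, and let Φ be the linear endomorphism of the space of superoperators defined by Φ(X) = E_{g∈G}[T(g) ∘ X ∘ Π₀ ∘ Ad(U g)⁻¹]. Then Φ maps W into W, and for every eigenvalue t of the superoperator E_{g∈G} T(g) and every eigenvalue p of the restriction of Φ to W, there exists a nonzero superoperator L satisfying E_{g∈G}[T(g) ∘ L ∘ Ad(U g)⁻¹] = L ∘ D_{p,t}. -/

import Mathlib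

noncomputable section

set_option synthInstance.maxHeartbeats 1000000
namespace RBPaper

abbrev Mat (d : ℕ) := Matrix (Fin d) (Fin d) ℂ

abbrev SuperOp (d : ℕ) := Module.End ℂ (Mat d)

/-- The superoperator `X ↦ U X Uᴴ` for a unitary `U`. -/
def Ad {d : ℕ} (U : Matrix.unitaryGroup (Fin d) ℂ) : SuperOp d :=
  LinearMap.mulLeft ℂ (U : Mat d) ∘ₗ LinearMap.mulRight ℂ (star (U : Mat d))

/-- The superoperator `X ↦ tr(X) • I`. -/
def traceMap (d : ℕ) : SuperOp d :=
  (Matrix.traceLinearMap (Fin d) ℂ ℂ).smulRight (1 : Mat d)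

/-- The depolarizing-type map `D_{p,t} : X ↦ (t/d)·tr(X)·I + p·(X − (tr(X)/d)·I)`. -/
def Dpt (d : ℕ) (p t : ℂ) : SuperOp d :=
  (t / d) • traceMap d + p • (LinearMap.id - (d : ℂ)⁻¹ • traceMap d)

/-- The projection `Π₀ : X ↦ X − (tr(X)/d)·I` onto traceless matrices. -/
def Pi0 (d : ℕ) : SuperOp d := LinearMap.id - (d : ℂ)⁻¹ • traceMap d

/-- Uniform average of a finitely-indexed family in a `ℂ`-module. -/
def expG {G : Type*} [Fintype G] {M : Type*} [AddCommMonoid M] [Module ℂ M]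
    (f : G → M) : M := (Fintype.card G : ℂ)⁻¹ • ∑ g, f g

/-- `(G, U)` is a unitary 2-design: the conjugation action has no nontrivial
invariant subspace of the traceless matrices. -/
def IsTwoDesign {d : ℕ} {G : Type*} [Group G] [Fintype G]
    (U : G →* Matrix.unitaryGroup (Fin d) ℂ) : Prop :=
  ∀ W : Submodule ℂ (Mat d),
    W ≤ LinearMap.ker (Matrix.traceLinearMap (Fin d) ℂ ℂ) →
    (∀ (g : G), ∀ X ∈ W, Ad (U g) X ∈ W) →
    W = ⊥ ∨ W = LinearMap.ker (Matrix.traceLinearMap (Fin d) ℂ ℂ)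


/-- The subspace of superoperators `X` with `X(I) = 0`. -/
def Wleft (d : ℕ) : Submodule ℂ (SuperOp d) :=
  LinearMap.ker (LinearMap.applyₗ (1 : Mat d) : SuperOp d →ₗ[ℂ] Mat d)

/-- The endomorphism `Φ(X) = E_g [T(g) ∘ X ∘ Π₀ ∘ Ad(U g)⁻¹]` of the space of
superoperators. -/
def PhiLeft {d : ℕ} {G : Type*} [Group G] [Fintype G]
    (U : G →* Matrix.unitaryGroup (Fin d) ℂ) (T : G → SuperOp d) :
    SuperOp d →ₗ[ℂ] SuperOp d :=
  expG (fun g : G =>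
    LinearMap.llcomp ℂ (Mat d) (Mat d) (Mat d) (T g) ∘ₗ
      LinearMap.lcomp ℂ (Mat d) (Pi0 d ∘ₗ Ad ((U g)⁻¹)))


lemma Ad_apply' {d : ℕ} (u : Matrix.unitaryGroup (Fin d) ℂ) (X : Mat d) :
    Ad u X = (u : Mat d) * X * star (u : Mat d) := by
  simp [Ad, LinearMap.mulLeft_apply, LinearMap.mulRight_apply, mul_assoc]

lemma trace_Ad {d : ℕ} (u : Matrix.unitaryGroup (Fin d) ℂ) (X : Mat d) :
    Matrix.trace (Ad u X) = Matrix.trace X := by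
  rw [Ad_apply', Matrix.trace_mul_cycle,
    show star (u : Mat d) * ↑u = 1 from u.2.1, one_mul]

lemma Pi0_apply {d : ℕ} (X : Mat d) :
    Pi0 d X = X - ((d : ℂ)⁻¹ * Matrix.trace X) • 1 := by
  simp [Pi0, traceMap, smul_smul]

lemma Ad_one {d : ℕ} (u : Matrix.unitaryGroup (Fin d) ℂ) : Ad u (1 : Mat d) = 1 := by
  rw [Ad_apply', mul_one]; exact u.2.2

lemma Pi0_one {d : ℕ} : Pi0 d (1 : Mat d) = 0 := by
  rcases Nat.eq_zero_or_pos d with hd | hd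
  · subst hd; ext i j; exact i.elim0
  · have hd' : (d : ℂ) ≠ 0 := Nat.cast_ne_zero.mpr hd.ne'
    rw [Pi0_apply, Matrix.trace_one]
    simp [inv_mul_cancel₀ hd']

lemma PhiLeft_apply {d : ℕ} {G : Type*} [Group G] [Fintype G]
    (U : G →* Matrix.unitaryGroup (Fin d) ℂ) (T : G → SuperOp d) (K : SuperOp d)
    (X : Mat d) :
    PhiLeft U T K X =
      (Fintype.card G : ℂ)⁻¹ • ∑ g, T g (K (Pi0 d (Ad ((U g)⁻¹) X))) := by
  simp [PhiLeft, expG, LinearMap.sum_apply]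

/-- Existence of a left noise map (first part of Theorem 1). -/
theorem left_noise_exists {d : ℕ} {G : Type*} [Group G] [Fintype G]
    (U : G →* Matrix.unitaryGroup (Fin d) ℂ) (T : G → SuperOp d) :
    (∀ X ∈ Wleft d, PhiLeft U T X ∈ Wleft d) ∧
      ∀ (hΦ : ∀ X ∈ Wleft d, PhiLeft U T X ∈ Wleft d) (t p : ℂ),
        Module.End.HasEigenvalue (R := ℂ) (M := Mat d) (expG (fun g : G => T g)) t →
        Module.End.HasEigenvalue (R := ℂ) (M := ↥(Wleft d))
          ((PhiLeft U T).restrict hΦ) p →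
        ∃ L : SuperOp d, L ≠ 0 ∧
          expG (fun g : G => T g ∘ₗ L ∘ₗ Ad ((U g)⁻¹)) = L ∘ₗ Dpt d p t := by
  constructor
  · intro X _
    simp only [Wleft, LinearMap.mem_ker, LinearMap.applyₗ_apply_apply]
    rw [PhiLeft_apply]
    simp [Ad_one, Pi0_one]
  · intro hΦ t p ht hp
    obtain ⟨v, hvev⟩ := ht.exists_hasEigenvector
    have hv0 : v ≠ 0 := hvev.2
    have hv : (Fintype.card G : ℂ)⁻¹ • ∑ g, T g v = t • v := by
      have := hvev.apply_eq_smul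
      simpa [expG, LinearMap.sum_apply] using this
    obtain ⟨K', hK'ev⟩ := hp.exists_hasEigenvector
    set K : SuperOp d := (K' : SuperOp d) with hKdef
    have hK0 : K ≠ 0 := fun h => hK'ev.2 (Subtype.ext h)
    have hK1 : K (1 : Mat d) = 0 := by
      simpa only [Wleft, LinearMap.mem_ker, LinearMap.applyₗ_apply_apply] using K'.2
    have hK : PhiLeft U T K = p • K := by
      have := hK'ev.apply_eq_smul
      have h2 := congrArg (Subtype.val) this
      simpa [LinearMap.restrict_apply] using h2
    have hd : (d : ℂ) ≠ 0 := by
      have hdnat : d ≠ 0 := by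
        rintro rfl
        exact hv0 (by ext i j; exact i.elim0)
      exact Nat.cast_ne_zero.mpr hdnat
    set c : ℂ := (Fintype.card G : ℂ)⁻¹ with hc
    set L : SuperOp d :=
      K + (d : ℂ)⁻¹ • ((Matrix.traceLinearMap (Fin d) ℂ ℂ).smulRight v) with hLdef
    have hL : ∀ Y : Mat d, L Y = K Y + ((d : ℂ)⁻¹ * Matrix.trace Y) • v := by
      intro Y
      simp [hLdef, smul_smul]
    have hKPi : ∀ Y : Mat d, K (Pi0 d Y) = K Y := by
      intro Y
      rw [Pi0_apply, map_sub, map_smul, hK1, smul_zero, sub_zero]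
    have hL1 : L (1 : Mat d) = v := by
      rw [hL, hK1, Matrix.trace_one, zero_add]
      simp [inv_mul_cancel₀ hd]
    refine ⟨L, fun h => hv0 (by rw [← hL1, h]; simp), ?_⟩
    refine LinearMap.ext fun X => ?_
    have hPK : c • ∑ g, T g (K (Pi0 d (Ad ((U g)⁻¹) X))) = p • K X := by
      have := congrArg (fun f : SuperOp d => f X) hK
      simpa [PhiLeft_apply] using this
    have lhs_eq : (expG (fun g : G => T g ∘ₗ L ∘ₗ Ad ((U g)⁻¹))) X
        = c • ∑ g, T g (L (Ad ((U g)⁻¹) X)) := by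
      simp [expG, LinearMap.sum_apply, hc]
    have key : ∀ g : G, T g (L (Ad ((U g)⁻¹) X))
        = T g (K (Pi0 d (Ad ((U g)⁻¹) X))) + ((d : ℂ)⁻¹ * Matrix.trace X) • T g v := by
      intro g
      rw [hL, trace_Ad, hKPi, map_add, map_smul]
    have hDX : (Dpt d p t) X
        = (t / d * Matrix.trace X) • (1 : Mat d)
          + p • (X - ((d : ℂ)⁻¹ * Matrix.trace X) • (1 : Mat d)) := by
      simp [Dpt, traceMap, smul_smul]
    have htr1 : Matrix.trace (1 : Mat d) = (d : ℂ) := by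
      rw [Matrix.trace_one]; simp
    have rhs_eq : (L ∘ₗ Dpt d p t) X
        = p • K X + ((d : ℂ)⁻¹ * (t * Matrix.trace X)) • v := by
      rw [LinearMap.comp_apply, hL, hDX]
      rw [map_add, map_smul, map_smul, map_sub, map_smul, hK1]
      rw [Matrix.trace_add, Matrix.trace_smul, Matrix.trace_smul, Matrix.trace_sub,
        Matrix.trace_smul, htr1]
      congr 1
      · simp
      · congr 1
        field_simp
        simp only [smul_eq_mul]; rw [div_mul_cancel₀ _ hd, div_mul_cancel₀ _ hd, sub_self, mul_zero, add_zero]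
    rw [lhs_eq, rhs_eq]
    calc c • ∑ g, T g (L (Ad ((U g)⁻¹) X))
        = c • ∑ g, (T g (K (Pi0 d (Ad ((U g)⁻¹) X)))
            + ((d : ℂ)⁻¹ * Matrix.trace X) • T g v) := by
          congr 1; exact Finset.sum_congr rfl fun g _ => key g
      _ = c • ∑ g, T g (K (Pi0 d (Ad ((U g)⁻¹) X)))
            + ((d : ℂ)⁻¹ * Matrix.trace X) • (c • ∑ g, T g v) := by
          rw [Finset.sum_add_distrib, smul_add, ← Finset.smul_sum, smul_comm]
      _ = p • K X + ((d : ℂ)⁻¹ * (t * Matrix.trace X)) • v := by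
          rw [hPK, hv, smul_smul]
          congr 1
          ring


end RBPaper
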